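/- arXiv:1311.6544 — 3 statements merged into one kernel-verified Lean document; each statement's English description precedes it below -/
import Mathlib

section
/- For every topological space X, |X| ≤ nu(X)^{κ(X)·sL_θ(X)}. -/
open Set Topology Cardinal

universe u

variable {X : Type u}

/-- The θ-closure of a set. -/
def thetaCl [TopologicalSpace X] (A : Set X) : Set X :=
  {x | ∀ U : Set X, IsOpen U → x ∈ U → (closure U ∩ A).Nonempty}

/-- The θ-closed hull of a set. -/
def thetaHull [TopologicalSpace X] (A : Set X) : Set X :=
  ⋂₀ {C : Set X | thetaCl C = C ∧ A ⊆ C}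

/-- A nonempty set is finitely non-Urysohn if every finite choice of closed
neighborhoods (closures of open neighborhoods) of finitely many of its points
has nonempty intersection. -/
def FinNonUrysohn [TopologicalSpace X] (A : Set X) : Prop :=
  A.Nonempty ∧ ∀ F : Set X, F ⊆ A → F.Nonempty → F.Finite →
    ∀ U : X → Set X, (∀ x ∈ F, IsOpen (U x) ∧ x ∈ U x) →
      (⋂ x ∈ F, closure (U x)).Nonempty

/-- The non-Urysohn number `nu(X)`. -/
noncomputable def nuNumber (X : Type u) [TopologicalSpace X] : Cardinal.{u} :=
  1 + ⨆ A : {A : Set X // FinNonUrysohn A}, #↥A.1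

/-- The Urysohn number `U(X)`. -/
noncomputable def UrysohnNumber (X : Type u) [TopologicalSpace X] : Cardinal.{u} :=
  sInf {κ : Cardinal.{u} | ∀ A : Set X, κ ≤ #↥A → ∃ U : X → Set X,
    (∀ a ∈ A, IsOpen (U a) ∧ a ∈ U a) ∧ (⋂ a ∈ A, closure (U a)) = ∅}

/-- The cardinal function `κ(X)`: the smallest infinite cardinal such that each
point has a family of at most that many closed neighborhoods cofinal (under
reverse inclusion) in the closures of its open neighborhoods. -/
noncomputable def kappaInv (X : Type u) [TopologicalSpace X] : Cardinal.{u} :=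
  sInf {κ : Cardinal.{u} | ℵ₀ ≤ κ ∧ ∀ x : X, ∃ V : Set (Set X), #↥V ≤ κ ∧
    (∀ W ∈ V, IsClosed W ∧ W ∈ nhds x) ∧
    ∀ U : Set X, IsOpen U → x ∈ U → ∃ W ∈ V, W ⊆ closure U}

/-- The character `χ(X)`. -/
noncomputable def chiChar (X : Type u) [TopologicalSpace X] : Cardinal.{u} :=
  sInf {κ : Cardinal.{u} | ℵ₀ ≤ κ ∧ ∀ x : X, ∃ B : Set (Set X), #↥B ≤ κ ∧
    (∀ U ∈ B, U ∈ nhds x) ∧ ∀ S ∈ nhds x, ∃ U ∈ B, U ⊆ S}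

/-- The θ-density `d_θ(X)`. -/
noncomputable def dTheta (X : Type u) [TopologicalSpace X] : Cardinal.{u} :=
  sInf {c : Cardinal.{u} | ∃ A : Set X, thetaCl A = Set.univ ∧ #↥A = c}

/-- The cardinal function `sL_θ(X)`. -/
noncomputable def sLtheta (X : Type u) [TopologicalSpace X] : Cardinal.{u} :=
  sInf {τ : Cardinal.{u} | ℵ₀ ≤ τ ∧ ∀ A : Set X, ∀ 𝒰 : Set (Set X),
    (∀ U ∈ 𝒰, IsOpen U) → thetaCl A ⊆ ⋃₀ 𝒰 →
    ∃ 𝒱 ⊆ 𝒰, #↥𝒱 ≤ τ ∧ A ⊆ closure (⋃₀ 𝒱)}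

/-- The cardinal function `wL_c(X)`. -/
noncomputable def wLc (X : Type u) [TopologicalSpace X] : Cardinal.{u} :=
  sInf {τ : Cardinal.{u} | ℵ₀ ≤ τ ∧ ∀ A : Set X, IsClosed A → ∀ 𝒰 : Set (Set X),
    (∀ U ∈ 𝒰, IsOpen U) → A ⊆ ⋃₀ 𝒰 →
    ∃ 𝒱 ⊆ 𝒰, #↥𝒱 ≤ τ ∧ A ⊆ closure (⋃₀ 𝒱)}

/-- The almost Lindelöf degree `aL(X)`. -/
noncomputable def aLdeg (X : Type u) [TopologicalSpace X] : Cardinal.{u} :=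
  sInf {τ : Cardinal.{u} | ℵ₀ ≤ τ ∧ ∀ 𝒰 : Set (Set X),
    (∀ U ∈ 𝒰, IsOpen U) → ⋃₀ 𝒰 = Set.univ →
    ∃ 𝒱 ⊆ 𝒰, #↥𝒱 ≤ τ ∧ (⋃ V ∈ 𝒱, closure V) = Set.univ}

/-- `X` is a Urysohn space: distinct points have open neighborhoods with
disjoint closures. -/
def UrysohnSpace (X : Type u) [TopologicalSpace X] : Prop :=
  ∀ x y : X, x ≠ y → ∃ U V : Set X, IsOpen U ∧ IsOpen V ∧ x ∈ U ∧ y ∈ V ∧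
    closure U ∩ closure V = ∅

/-- For a set `S`, the intersection over all choices of closed neighborhoods of
the points of `S` of the θ-closures of the intersections of the choices. -/
def capSet [TopologicalSpace X] (S : Set X) : Set X :=
  {y | ∀ U : X → Set X, (∀ a ∈ S, IsOpen (U a) ∧ a ∈ U a) →
    y ∈ thetaCl (⋂ a ∈ S, closure (U a))}

/-- For a set `M`, the intersection over all nonempty finite `F ⊆ M` and all
choices of open neighborhoods of points of `F` of
`cl_θ(⋂_{x∈F} closure (U x))`. -/
def fnuCap [TopologicalSpace X] (M : Set X) : Set X :=
  {y | ∀ F : Set X, F ⊆ M → F.Nonempty → F.Finite → ∀ U : X → Set X,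
    (∀ x ∈ F, IsOpen (U x) ∧ x ∈ U x) →
    y ∈ thetaCl (⋂ x ∈ F, closure (U x))}

/-!
Let `τ = κ(X) · sL_θ(X)` and `λ = nu(X) ^ τ`, and index, for every point `z`, a family of closed
neighbourhoods of `z` cofinal in the closures of its open neighbourhoods by one set `ι` of size
`κ(X)`. For `z ∈ cl_θ B` every finite intersection of these neighbourhoods meets `B`; choosing such
points sends `z` to a function `Finset ι → B`, and every fibre of this map is finitely
non-Urysohn, so `|cl_θ B| ≤ |B| ^ κ(X) · nu(X)`.

A closing-off argument of length `τ⁺` yields a set `D` with `|D| ≤ λ` containing the θ-closure of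
each of its subsets of size `≤ τ`, and a point outside `cl(⋃ 𝒱)` for each family `𝒱` of at most
`τ` interiors of such neighbourhoods of points of `D` with `cl(⋃ 𝒱) ≠ X`. As `κ(X) ≤ τ`, `D` is
θ-closed. If `q ∉ D`, some closed neighbourhood of `q` misses `D`, and `sL_θ(X) ≤ τ` gives such a
family `𝒱` with `D ⊆ cl(⋃ 𝒱) ∌ q`, contradicting the choice of `D`. Hence `D = X`.
-/

section ClosingOff

variable {α : Type u}

def closingOffStep (Φ : Set α → Set α) (τ : Cardinal.{u}) (B : Set α) : Set α :=
  ⋃ C ∈ {C : Set α | C ⊆ B ∧ #C ≤ τ}, Φ C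

theorem mk_closingOffStep_le (Φ : Set α → Set α) {τ c : Cardinal.{u}} (hc : ℵ₀ ≤ c)
    (hcτ : c ^ τ ≤ c) (hΦ : ∀ C : Set α, #C ≤ τ → #(Φ C) ≤ c) {B : Set α} (hB : #B ≤ c) :
    #(closingOffStep Φ τ B) ≤ c := by
  refine (mk_biUnion_le _ _).trans ?_
  calc _ ≤ c * c := by
        refine mul_le_mul' ?_ (ciSup_le' fun C => hΦ _ C.2.2)
        exact (mk_bounded_subset_le B τ).trans ((power_le_power_right (max_le hB hc)).trans hcτ)
    _ = c := mul_eq_self hc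

noncomputable def closingOffStage {ι : Type*} [LT ι] [WellFoundedLT ι] (Φ : Set α → Set α)
    (τ : Cardinal.{u}) : ι → Set α :=
  wellFounded_lt.fix fun i stage => closingOffStep Φ τ (⋃ (j) (hj : j < i), stage j hj)

theorem closingOffStage_eq {ι : Type*} [LT ι] [WellFoundedLT ι] (Φ : Set α → Set α)
    (τ : Cardinal.{u}) (i : ι) :
    closingOffStage Φ τ i = closingOffStep Φ τ (⋃ j < i, closingOffStage Φ τ j) := by
  rw [closingOffStage, WellFounded.fix_eq]

theorem mk_closingOffStage_le {ι : Type u} [LinearOrder ι] [WellFoundedLT ι]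
    (Φ : Set α → Set α) {τ c : Cardinal.{u}} (hc : ℵ₀ ≤ c) (hcτ : c ^ τ ≤ c)
    (hΦ : ∀ C : Set α, #C ≤ τ → #(Φ C) ≤ c) (hι : ∀ i : ι, #(Iio i) ≤ c) (i : ι) :
    #(closingOffStage Φ τ i) ≤ c := by
  induction i using WellFoundedLT.induction with
  | _ i ih =>
    rw [closingOffStage_eq]
    refine mk_closingOffStep_le Φ hc hcτ hΦ ((mk_biUnion_le _ (Iio i)).trans ?_)
    exact (mul_le_mul' (hι i) (ciSup_le' fun j : Iio i => ih j j.2)).trans (mul_eq_self hc).le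

theorem exists_mk_le_closed_under (Φ : Set α → Set α) {τ c : Cardinal.{u}} (hτ : ℵ₀ ≤ τ)
    (hτc : τ < c) (hcτ : c ^ τ ≤ c) (hΦ : ∀ C : Set α, #C ≤ τ → #(Φ C) ≤ c) :
    ∃ D : Set α, #D ≤ c ∧ ∀ C ⊆ D, #C ≤ τ → Φ C ⊆ D := by
  let ι := (Order.succ τ).ord.ToType
  have hc : ℵ₀ ≤ c := hτ.trans hτc.le
  have hsucc : Order.succ τ ≤ c := Order.succ_le_of_lt hτc
  have hstage (i : ι) : #(closingOffStage Φ τ i) ≤ c := by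
    refine mk_closingOffStage_le Φ hc hcτ hΦ (fun i => ?_) i
    have := mk_Iio_lt i (by simp [ι])
    exact this.le.trans ((mk_ord_toType _).trans_le hsucc)
  refine ⟨⋃ i : ι, closingOffStage Φ τ i, ?_, fun C hC hCτ => ?_⟩
  · refine (mk_iUnion_le _).trans ?_
    calc _ ≤ c * c := mul_le_mul' ((mk_ord_toType _).trans_le hsucc) (ciSup_le' hstage)
      _ = c := mul_eq_self hc
  have hmem : ∀ x : C, ∃ i : ι, (x : α) ∈ closingOffStage Φ τ i := fun x => mem_iUnion.1 (hC x.2)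
  choose f hf using hmem
  -- `C` is too small to be cofinal in `ι`, whose cofinality is the regular cardinal `τ⁺`.
  obtain ⟨i, hi⟩ : ∃ i, ∀ j ∈ range f, j < i := by
    refine not_isCofinal_iff.1 fun hcof => ?_
    have := (Order.cof_le hcof).trans (mk_range_le.trans hCτ)
    rw [Ordinal.cof_toType, (isRegular_succ hτ).cof_ord] at this
    exact (Order.lt_succ_of_le le_rfl).not_ge this
  refine Subset.trans ?_ (subset_iUnion _ i)
  rw [closingOffStage_eq]
  refine subset_biUnion_of_mem (u := Φ) ⟨fun x hx => ?_, hCτ⟩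
  exact mem_iUnion₂.2 ⟨f ⟨x, hx⟩, hi _ (mem_range_self _), hf _⟩

end ClosingOff

theorem power_le_two_power {a b τ : Cardinal} (hτ : ℵ₀ ≤ τ) (ha : a ≤ τ) (hb : b ≤ τ) :
    a ^ b ≤ 2 ^ τ :=
  (power_le_power_right ha).trans <|
    (power_le_power_left (aleph0_pos.trans_le hτ).ne' hb).trans (power_self_eq hτ).le

theorem exists_subset_mk_le_of_subset_biUnion {α β : Type u} {f : α → Set β} {D : Set α}
    {s : Set β} (hs : s ⊆ ⋃ x ∈ D, f x) : ∃ C ⊆ D, #C ≤ #s ∧ s ⊆ ⋃ x ∈ C, f x := by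
  have hmem : ∀ y : s, ∃ x ∈ D, (y : β) ∈ f x := fun y => by simpa using hs y.2
  choose g hgD hg using hmem
  exact ⟨range g, range_subset_iff.2 hgD, mk_range_le,
    fun y hy => mem_biUnion (mem_range_self ⟨y, hy⟩) (hg ⟨y, hy⟩)⟩

section ThetaClosure

variable [TopologicalSpace X]

theorem subset_thetaCl (A : Set X) : A ⊆ thetaCl A :=
  fun x hx _ _ hxU => ⟨x, subset_closure hxU, hx⟩

theorem inter_nonempty_of_mem_thetaCl {B : Set X} {z : X} (hz : z ∈ thetaCl B) {N : Set X}
    (hN : IsClosed N) (hNz : N ∈ 𝓝 z) : (N ∩ B).Nonempty := by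
  obtain ⟨p, hpN, hpB⟩ := hz (interior N) isOpen_interior (mem_interior_iff_mem_nhds.2 hNz)
  exact ⟨p, closure_minimal interior_subset hN hpN, hpB⟩

/-- The families of closed neighbourhoods measured by `κ(X)`. -/
structure IsThetaNhdBasis {ι : Type*} (x : X) (e : ι → Set X) : Prop where
  isClosed : ∀ i, IsClosed (e i)
  mem_nhds : ∀ i, e i ∈ 𝓝 x
  exists_subset_closure : ∀ U, IsOpen U → x ∈ U → ∃ i, e i ⊆ closure U

theorem IsThetaNhdBasis.exists_subset_mk_le_mem_thetaCl {ι : Type u} {z : X} {e : ι → Set X}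
    (he : IsThetaNhdBasis z e) {D : Set X} (hz : z ∈ thetaCl D) :
    ∃ C ⊆ D, #C ≤ #ι ∧ z ∈ thetaCl C := by
  have hmeet (i : ι) : (e i ∩ D).Nonempty :=
    inter_nonempty_of_mem_thetaCl hz (he.isClosed i) (he.mem_nhds i)
  choose p hpe hpD using hmeet
  refine ⟨range p, range_subset_iff.2 hpD, mk_range_le, fun U hU hzU => ?_⟩
  obtain ⟨i, hi⟩ := he.exists_subset_closure U hU hzU
  exact ⟨p i, hi (hpe i), mem_range_self i⟩

theorem thetaCl_subset_of_forall_mk_le {ι : Type u} {e : X → ι → Set X}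
    (he : ∀ x, IsThetaNhdBasis x (e x)) {D : Set X}
    (hD : ∀ C ⊆ D, #C ≤ #ι → thetaCl C ⊆ D) : thetaCl D ⊆ D := fun z hz => by
  obtain ⟨C, hCD, hC, hzC⟩ := (he z).exists_subset_mk_le_mem_thetaCl hz
  exact hD C hCD hC hzC

theorem FinNonUrysohn.of_forall_mem_biInter {ι : Type*} {A : Set X} (hA : A.Nonempty)
    {e : X → ι → Set X} (he : ∀ x ∈ A, IsThetaNhdBasis x (e x)) (p : Finset ι → X)
    (hp : ∀ x ∈ A, ∀ s, p s ∈ ⋂ i ∈ s, e x i) : FinNonUrysohn A := by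
  classical
  refine ⟨hA, fun F hFA _ hF U hU => ?_⟩
  have hsel (x : F) : ∃ i, e x i ⊆ closure (U x) :=
    (he x (hFA x.2)).exists_subset_closure _ (hU x x.2).1 (hU x x.2).2
  choose i hi using hsel
  have : Fintype F := hF.fintype
  refine ⟨p (Finset.univ.image i), mem_iInter₂.2 fun x hx => hi ⟨x, hx⟩ ?_⟩
  exact mem_iInter₂.1 (hp x (hFA hx) _) _ (Finset.mem_image_of_mem _ (Finset.mem_univ _))

theorem mk_le_iSup_finNonUrysohn {A : Set X} (hA : FinNonUrysohn A) :
    #A ≤ ⨆ B : {B : Set X // FinNonUrysohn B}, #B.1 :=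
  le_ciSup (f := fun B : {B : Set X // FinNonUrysohn B} => #B.1)
    ⟨#X, by rintro _ ⟨B, rfl⟩; exact mk_set_le _⟩ ⟨A, hA⟩

theorem mk_le_nuNumber {A : Set X} (hA : FinNonUrysohn A) : #A ≤ nuNumber X :=
  (mk_le_iSup_finNonUrysohn hA).trans (self_le_add_left _ 1)

theorem two_le_nuNumber [Nonempty X] : 2 ≤ nuNumber X := by
  obtain ⟨x⟩ := ‹Nonempty X›
  have hx : FinNonUrysohn ({x} : Set X) := by
    refine ⟨singleton_nonempty x, fun F hF hFne _ U hU => ⟨x, mem_iInter₂.2 fun y hy => ?_⟩⟩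
    obtain rfl : y = x := hF hy
    exact subset_closure (hU y hy).2
  calc 2 = 1 + #({x} : Set X) := by rw [mk_singleton, one_add_one_eq_two]
    _ ≤ nuNumber X := add_le_add_right (mk_le_iSup_finNonUrysohn hx) 1

theorem mk_thetaCl_le {ι : Type u} (e : X → ι → Set X) (he : ∀ x, IsThetaNhdBasis x (e x))
    (B : Set X) : #(thetaCl B) ≤ #B ^ #(Finset ι) * nuNumber X := by
  have hmeet (z : X) (hz : z ∈ thetaCl B) (s : Finset ι) : ∃ p ∈ B, p ∈ ⋂ i ∈ s, e z i :=
    (inter_nonempty_of_mem_thetaCl hz (isClosed_biInter fun i _ => (he z).isClosed i)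
      ((Filter.biInter_finset_mem s).2 fun i _ => (he z).mem_nhds i)).imp fun p hp => ⟨hp.2, hp.1⟩
  choose! g hgB hg using hmeet
  let f : thetaCl B → Finset ι → B := fun z s => ⟨g z s, hgB z z.2 s⟩
  rw [power_def]
  refine mk_le_mk_mul_of_mk_preimage_le f fun ψ => ?_
  rw [← mk_image_eq Subtype.val_injective]
  rcases (Subtype.val '' (f ⁻¹' {ψ})).eq_empty_or_nonempty with hA | hA
  · simp [hA]
  refine mk_le_nuNumber <|
    FinNonUrysohn.of_forall_mem_biInter hA (fun x _ => he x) (fun s => ψ s) ?_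
  rintro _ ⟨z, hz, rfl⟩ s
  rw [← show f z = ψ from hz]
  exact hg z z.2 s

end ThetaClosure

section CardinalFunctions

variable [TopologicalSpace X]

theorem kappaInv_mem : kappaInv X ∈ {κ : Cardinal.{u} | ℵ₀ ≤ κ ∧ ∀ x : X, ∃ V : Set (Set X),
    #V ≤ κ ∧ (∀ W ∈ V, IsClosed W ∧ W ∈ 𝓝 x) ∧
    ∀ U : Set X, IsOpen U → x ∈ U → ∃ W ∈ V, W ⊆ closure U} := by
  refine csInf_mem ⟨max ℵ₀ #(Set X), le_max_left _ _, fun x => ?_⟩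
  refine ⟨closure '' {U | IsOpen U ∧ x ∈ U}, (mk_set_le _).trans (le_max_right _ _), ?_,
    fun U hU hxU => ⟨closure U, mem_image_of_mem _ ⟨hU, hxU⟩, subset_rfl⟩⟩
  rintro _ ⟨U, ⟨hU, hxU⟩, rfl⟩
  exact ⟨isClosed_closure, Filter.mem_of_superset (hU.mem_nhds hxU) subset_closure⟩

theorem sLtheta_mem : sLtheta X ∈ {τ : Cardinal.{u} | ℵ₀ ≤ τ ∧ ∀ A : Set X, ∀ 𝒰 : Set (Set X),
    (∀ U ∈ 𝒰, IsOpen U) → thetaCl A ⊆ ⋃₀ 𝒰 → ∃ 𝒱 ⊆ 𝒰, #𝒱 ≤ τ ∧ A ⊆ closure (⋃₀ 𝒱)} :=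
  csInf_mem ⟨max ℵ₀ #(Set X), le_max_left _ _, fun A 𝒰 _ h𝒰 => ⟨𝒰, subset_rfl,
    (mk_set_le _).trans (le_max_right _ _), ((subset_thetaCl A).trans h𝒰).trans subset_closure⟩⟩

theorem exists_isThetaNhdBasis (x : X) :
    ∃ e : (kappaInv X).out → Set X, IsThetaNhdBasis x e := by
  obtain ⟨V, hVκ, hV, hVcof⟩ := kappaInv_mem.2 x
  obtain ⟨W₀, hW₀, -⟩ := hVcof univ isOpen_univ (mem_univ x)
  have : Nonempty V := ⟨⟨W₀, hW₀⟩⟩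
  obtain ⟨g⟩ : Nonempty (V ↪ (kappaInv X).out) := by rwa [← le_def, mk_out]
  let v : (kappaInv X).out → V := Function.invFun g
  have hv : Function.Surjective v := Function.invFun_surjective g.injective
  refine ⟨fun i => v i, ⟨fun i => (hV _ (v i).2).1, fun i => (hV _ (v i).2).2, fun U hU hxU => ?_⟩⟩
  obtain ⟨W, hWV, hWU⟩ := hVcof U hU hxU
  obtain ⟨i, hi⟩ := hv ⟨W, hWV⟩
  exact ⟨i, by rwa [hi]⟩

theorem mk_thetaCl_union_image_le [Nonempty X] {ι : Type u} [Infinite ι] {e : X → ι → Set X}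
    (he : ∀ x, IsThetaNhdBasis x (e x)) {τ : Cardinal.{u}} (hτ : ℵ₀ ≤ τ) (hι : #ι ≤ τ)
    (pick : Set (Set X) → X) {C : Set X} (hC : #C ≤ τ) :
    #↥(thetaCl C ∪ pick '' {𝒱 | 𝒱 ⊆ ⋃ x ∈ C, range (fun i => interior (e x i)) ∧ #𝒱 ≤ τ}) ≤
      nuNumber X ^ τ := by
  have h2τ : 2 ^ τ ≤ nuNumber X ^ τ := power_le_power_right two_le_nuNumber
  have hc : ℵ₀ ≤ nuNumber X ^ τ := hτ.trans ((cantor τ).le.trans h2τ)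
  have hθ : #(thetaCl C) ≤ nuNumber X ^ τ := by
    refine (mk_thetaCl_le e he C).trans ((mul_le_mul' ?_ ?_).trans (mul_eq_self hc).le)
    · rw [mk_finset_of_infinite]
      exact (power_le_two_power hτ hC hι).trans h2τ
    · exact self_le_power _ (one_le_aleph0.trans hτ)
  have hpool : #(⋃ x ∈ C, range fun i => interior (e x i)) ≤ τ :=
    (mk_biUnion_le _ C).trans <| (mul_le_mul' hC (ciSup_le' fun _ => mk_range_le.trans hι)).trans
      (mul_eq_self hτ).le
  have hpick : #(pick '' {𝒱 | 𝒱 ⊆ ⋃ x ∈ C, range (fun i => interior (e x i)) ∧ #𝒱 ≤ τ}) ≤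
      nuNumber X ^ τ :=
    mk_image_le.trans <| (mk_bounded_subset_le _ τ).trans <|
      (power_le_two_power hτ (max_le hpool hτ) le_rfl).trans h2τ
  exact (mk_union_le _ _).trans ((add_le_add hθ hpick).trans (add_eq_self hc).le)

theorem eq_univ_of_thetaCl_subset {τ : Cardinal.{u}} (hτ : sLtheta X ≤ τ) {ι : Type*}
    {e : X → ι → Set X} (he : ∀ x, IsThetaNhdBasis x (e x)) {D : Set X} (hD : thetaCl D ⊆ D)
    (hdense : ∀ 𝒱 ⊆ ⋃ x ∈ D, range (fun i => interior (e x i)), #𝒱 ≤ τ →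
      D ⊆ closure (⋃₀ 𝒱) → closure (⋃₀ 𝒱) = Set.univ) : D = Set.univ := by
  by_contra hne
  obtain ⟨q, hq⟩ := (ne_univ_iff_exists_notMem D).1 hne
  obtain ⟨O, hO, hqO, hOD⟩ : ∃ O, IsOpen O ∧ q ∈ O ∧ ¬ (closure O ∩ D).Nonempty := by
    by_contra! h
    exact hq (hD h)
  have hDG : D ⊆ (closure O)ᶜ := fun x hxD hxO => hOD ⟨x, hxO, hxD⟩
  have hqG : q ∉ closure (closure O)ᶜ :=
    disjoint_left.1 ((disjoint_compl_right.mono_left subset_closure).closure_right hO) hqO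
  let 𝒰 : Set (Set X) :=
    {U | ∃ x ∈ D, ∃ i, U = interior (e x i) ∧ e x i ⊆ closure (closure O)ᶜ}
  have hcover : thetaCl D ⊆ ⋃₀ 𝒰 := fun x hx => by
    obtain ⟨i, hi⟩ := (he x).exists_subset_closure _ isClosed_closure.isOpen_compl (hDG (hD hx))
    exact ⟨_, ⟨x, hD hx, i, rfl, hi⟩, mem_interior_iff_mem_nhds.2 ((he x).mem_nhds i)⟩
  have h𝒰 : ∀ U ∈ 𝒰, IsOpen U := by
    rintro _ ⟨x, -, i, rfl, -⟩
    exact isOpen_interior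
  obtain ⟨𝒱, h𝒱𝒰, h𝒱τ, hD𝒱⟩ := sLtheta_mem.2 D 𝒰 h𝒰 hcover
  have h𝒱G : ⋃₀ 𝒱 ⊆ closure (closure O)ᶜ := sUnion_subset fun U hU => by
    obtain ⟨x, -, i, rfl, hi⟩ := h𝒱𝒰 hU
    exact interior_subset.trans hi
  have h𝒱D : 𝒱 ⊆ ⋃ x ∈ D, range (fun i => interior (e x i)) := fun U hU => by
    obtain ⟨x, hx, i, rfl, -⟩ := h𝒱𝒰 hU
    exact mem_biUnion hx (mem_range_self i)
  have hq𝒱 : q ∈ closure (⋃₀ 𝒱) := hdense 𝒱 h𝒱D (h𝒱τ.trans hτ) hD𝒱 ▸ mem_univ q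
  exact hqG (closure_minimal h𝒱G isClosed_closure hq𝒱)

end CardinalFunctions

theorem statement9 (X : Type u) [TopologicalSpace X] :
    #X ≤ nuNumber X ^ (kappaInv X * sLtheta X) := by
  rcases isEmpty_or_nonempty X with _ | _
  · simp
  obtain ⟨hκ, -⟩ := kappaInv_mem (X := X)
  obtain ⟨hsL, -⟩ := sLtheta_mem (X := X)
  set τ := kappaInv X * sLtheta X
  have hκτ : #(kappaInv X).out ≤ τ := by
    rw [mk_out]
    exact le_mul_right (aleph0_pos.trans_le hsL).ne'
  have hsLτ : sLtheta X ≤ τ := le_mul_left (aleph0_pos.trans_le hκ).ne'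
  have hτ : ℵ₀ ≤ τ := hsL.trans hsLτ
  have : Infinite (kappaInv X).out := infinite_iff.2 (by rwa [mk_out])
  choose e he using exists_isThetaNhdBasis (X := X)
  let pick (𝒱 : Set (Set X)) : X := Classical.epsilon (· ∉ closure (⋃₀ 𝒱))
  obtain ⟨D, hDc, hD⟩ := exists_mk_le_closed_under
    (fun C => thetaCl C ∪ pick '' {𝒱 | 𝒱 ⊆ ⋃ x ∈ C, range (fun i => interior (e x i)) ∧ #𝒱 ≤ τ})
    hτ ((cantor τ).trans_le (power_le_power_right two_le_nuNumber))
    (by rw [← power_mul, mul_eq_self hτ]) fun C hC => mk_thetaCl_union_image_le he hτ hκτ pick hC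
  have hθ : thetaCl D ⊆ D := thetaCl_subset_of_forall_mk_le he fun C hCD hC =>
    subset_union_left.trans (hD C hCD (hC.trans hκτ))
  have huniv : D = Set.univ := eq_univ_of_thetaCl_subset hsLτ he hθ fun 𝒱 h𝒱 h𝒱τ hD𝒱 => by
    by_contra hne
    obtain ⟨C, hCD, hC, h𝒱C⟩ := exists_subset_mk_le_of_subset_biUnion h𝒱
    exact Classical.epsilon_spec ((ne_univ_iff_exists_notMem _).1 hne)
      (hD𝒱 (hD C hCD (hC.trans h𝒱τ) (Or.inr ⟨𝒱, ⟨h𝒱C, h𝒱τ⟩, rfl⟩)))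
  rw [← mk_univ, ← huniv]
  exact hDc
end

section
/- If X is a topological space whose Urysohn number U(X) is finite (equivalently, nu(X) is finite), then |X| ≤ 2^{κ(X)·aL(X)}. -/
open Set Topology Cardinal

universe u

variable {X : Type u}

/-!
Put `κ = κ(X) · aL(X)` and fix at each point `x` a family `V x` of at most `κ` closed
neighbourhoods, cofinal among the closures of open neighbourhoods of `x`. Points of `cl_θ B`
with the same trace `{W ∩ B | W ∈ V x}` form a finitely non-Urysohn set, so there are fewer than
`U(X)` of them; hence `|cl_θ B| ≤ 2^κ` whenever `|B| ≤ κ`. Closing off in `κ⁺` steps gives a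
θ-closed `H` with `|H| ≤ 2^κ` that no `≤ κ` members of `⋃_{x ∈ H} V x` cover unless they cover
all of `X`. If `q ∉ H`, cover `X` by the interiors of members of `V x` missing `q` (`x ∈ H`)
and, off `H`, by open sets whose closures miss `H`. Almost Lindelöfness picks `≤ κ` of them
whose closures cover `X`; those from `H` cover `H` but not `q`, a contradiction.
-/
section ClosingOff

variable {α : Type u} {κ μ : Cardinal.{u}}

noncomputable def closingStage (κ : Cardinal.{u}) (F : Set α → Set α) : Ordinal.{u} → Set α :=
  Ordinal.lt_wf.fix fun o s => ⋃ j, ⋃ hj : j < o, ⋃ B ∈ {B | B ⊆ s j hj ∧ #B ≤ κ}, F B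

lemma closingStage_eq (F : Set α → Set α) (o : Ordinal.{u}) :
    closingStage κ F o = ⋃ j < o, ⋃ B ∈ {B | B ⊆ closingStage κ F j ∧ #B ≤ κ}, F B :=
  Ordinal.lt_wf.fix_eq _ o

lemma subset_closingStage (F : Set α → Set α) {j o : Ordinal.{u}} (hjo : j < o) {B : Set α}
    (hB : B ⊆ closingStage κ F j) (hBκ : #B ≤ κ) : F B ⊆ closingStage κ F o := by
  intro x hx
  rw [closingStage_eq]
  exact mem_biUnion hjo (mem_biUnion (x := B) ⟨hB, hBκ⟩ hx)

lemma closingStage_mono (F : Set α → Set α) : Monotone (closingStage κ F) := by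
  intro j o hjo
  rw [closingStage_eq, closingStage_eq]
  exact biUnion_mono (fun i hi => lt_of_lt_of_le hi hjo) fun _ _ => subset_rfl

lemma mk_closingStage_le (hκ : ℵ₀ ≤ κ) (hκμ : κ < μ) (hμ : μ ^ κ ≤ μ) (F : Set α → Set α)
    (hF : ∀ B : Set α, #B ≤ κ → #(F B) ≤ μ) (o : Ordinal.{u}) (ho : o.card ≤ μ) :
    #(closingStage κ F o) ≤ μ := by
  have hμ₀ : ℵ₀ ≤ μ := hκ.trans hκμ.le
  induction o using WellFoundedLT.induction with
  | _ o ih =>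
  rw [closingStage_eq]
  refine mk_biUnion_le_of_le ho hμ₀ _ fun j hj => ?_
  set 𝒮 := {B | B ⊆ closingStage κ F j ∧ #B ≤ κ}
  have hjμ : #(closingStage κ F j) ≤ μ := ih j hj ((Ordinal.card_le_card hj.le).trans ho)
  have h𝒮 : #𝒮 ≤ μ :=
    (mk_bounded_subset_le _ κ).trans <| (power_le_power_right (max_le hjμ hμ₀)).trans hμ
  calc #↥(⋃ B ∈ 𝒮, F B) ≤ #𝒮 * ⨆ B : 𝒮, #(F B) := mk_biUnion_le _ _
    _ ≤ μ * μ := mul_le_mul' h𝒮 (ciSup_le' fun B => hF B B.2.2)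
    _ = μ := mul_eq_self hμ₀

theorem exists_mk_le_closed_under_small_subsets (hκ : ℵ₀ ≤ κ) (hκμ : κ < μ) (hμ : μ ^ κ ≤ μ)
    (F : Set α → Set α) (hF : ∀ B : Set α, #B ≤ κ → #(F B) ≤ μ) :
    ∃ H : Set α, #H ≤ μ ∧ ∀ B ⊆ H, #B ≤ κ → F B ⊆ H := by
  set ν := (Order.succ κ).ord
  refine ⟨closingStage κ F ν, mk_closingStage_le hκ hκμ hμ F hF ν ?_, fun B hB hBκ => ?_⟩
  · rw [card_ord]
    exact Order.succ_le_of_lt hκμ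
  have hstage : ∀ b : B, ∃ j < ν, b.1 ∈ closingStage κ F (Order.succ j) := by
    intro b
    have hb := hB b.2
    rw [closingStage_eq] at hb
    obtain ⟨j, hj, hbj⟩ := mem_iUnion₂.1 hb
    refine ⟨j, hj, ?_⟩
    rw [closingStage_eq]
    exact mem_biUnion (Order.lt_succ j) hbj
  choose g hgν hg using hstage
  have hoν : ⨆ b, Order.succ (g b) < ν := by
    have hν : Order.IsSuccLimit ν := isSuccLimit_ord (hκ.trans (Order.le_succ κ))
    refine Ordinal.iSup_lt_of_lt_cof ?_ fun b => hν.succ_lt (hgν b)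
    rw [(isRegular_succ hκ).cof_ord]
    exact hBκ.trans_lt (Order.lt_succ κ)
  refine subset_closingStage F hoν (fun b hb => ?_) hBκ
  exact closingStage_mono F (Ordinal.le_iSup _ ⟨b, hb⟩) (hg ⟨b, hb⟩)

end ClosingOff

section ThetaClosure

variable [TopologicalSpace X]

def IsClosedNhdsCofinal (V : Set (Set X)) (x : X) : Prop :=
  (∀ W ∈ V, IsClosed W ∧ W ∈ 𝓝 x) ∧ ∀ U : Set X, IsOpen U → x ∈ U → ∃ W ∈ V, W ⊆ closure U

lemma inter_nonempty_of_mem_thetaCl_s13 {A W : Set X} {x : X} (hx : x ∈ thetaCl A)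
    (hW : IsClosed W) (hWx : W ∈ 𝓝 x) : (W ∩ A).Nonempty :=
  (hx _ isOpen_interior (mem_interior_iff_mem_nhds.2 hWx)).mono <|
    inter_subset_inter_left _ (hW.closure_subset_iff.2 interior_subset)

lemma notMem_thetaCl_iff {A : Set X} {x : X} :
    x ∉ thetaCl A ↔ ∃ U, IsOpen U ∧ x ∈ U ∧ closure U ∩ A = ∅ := by
  simp only [thetaCl, mem_ofPred_eq, not_forall, not_nonempty_iff_eq_empty, exists_prop]

lemma exists_isOpen_notMem_closure_of_notMem_thetaCl {A : Set X} {x q : X} (hx : x ∈ A)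
    (hq : q ∉ thetaCl A) : ∃ U, IsOpen U ∧ x ∈ U ∧ q ∉ closure U := by
  by_contra! h
  refine hq fun G hG hqG => ⟨x, mem_closure_iff.2 fun U hU hxU => ?_, hx⟩
  exact (mem_closure_iff.1 (h U hU hxU) G hG hqG).mono fun _ h => ⟨h.2, h.1⟩

namespace IsClosedNhdsCofinal

variable {V : Set (Set X)} {x : X}

lemma mem_thetaCl_iff (hV : IsClosedNhdsCofinal V x) {A : Set X} :
    x ∈ thetaCl A ↔ ∀ W ∈ V, (W ∩ A).Nonempty := by
  refine ⟨fun hx W hW => inter_nonempty_of_mem_thetaCl_s13 hx (hV.1 W hW).1 (hV.1 W hW).2,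
    fun h U hU hxU => ?_⟩
  obtain ⟨W, hWV, hWU⟩ := hV.2 U hU hxU
  exact (h W hWV).mono (inter_subset_inter_left _ hWU)

lemma exists_subset_mem_thetaCl (hV : IsClosedNhdsCofinal V x) {A : Set X}
    (hx : x ∈ thetaCl A) : ∃ B ⊆ A, #B ≤ #V ∧ x ∈ thetaCl B := by
  choose f hfW hfA using fun W : V => hV.mem_thetaCl_iff.1 hx W.1 W.2
  refine ⟨range f, range_subset_iff.2 hfA, mk_range_le, hV.mem_thetaCl_iff.2 fun W hW => ?_⟩
  exact ⟨f ⟨W, hW⟩, hfW ⟨W, hW⟩, mem_range_self _⟩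

end IsClosedNhdsCofinal

end ThetaClosure

section UrysohnNumber

variable [TopologicalSpace X]

lemma exists_biInter_closure_eq_empty {A : Set X} (hA : UrysohnNumber X ≤ #A) :
    ∃ U : X → Set X, (∀ a ∈ A, IsOpen (U a) ∧ a ∈ U a) ∧ ⋂ a ∈ A, closure (U a) = ∅ := by
  refine csInf_mem (s := {κ : Cardinal.{u} | ∀ A : Set X, κ ≤ #A → ∃ U : X → Set X,
    (∀ a ∈ A, IsOpen (U a) ∧ a ∈ U a) ∧ (⋂ a ∈ A, closure (U a)) = ∅}) ?_ A hA
  exact ⟨Order.succ #X, fun A hA =>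
    absurd (hA.trans (mk_set_le A)) (Order.lt_succ #X).not_ge⟩

lemma FinNonUrysohn.mk_lt_urysohnNumber {A : Set X} (hA : FinNonUrysohn A)
    (hU : UrysohnNumber X < ℵ₀) : #A < UrysohnNumber X := by
  by_contra! hle
  obtain ⟨F, hFA, hF⟩ := le_mk_iff_exists_subset.1 hle
  obtain ⟨U, hUF, hempty⟩ := exists_biInter_closure_eq_empty hF.ge
  rcases F.eq_empty_or_nonempty with rfl | hFne
  · simp only [mem_empty_iff_false, iInter_of_empty, iInter_univ, univ_eq_empty_iff] at hempty
    exact hempty.false hA.1.some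
  · have hFfin : F.Finite := lt_aleph0_iff_set_finite.1 (hF ▸ hU)
    exact (hA.2 F hFA hFne hFfin U hUF).ne_empty hempty

end UrysohnNumber

section ThetaClosureCardinality

variable [TopologicalSpace X] {V : X → Set (Set X)}

lemma finNonUrysohn_of_trace_eq (hV : ∀ x, IsClosedNhdsCofinal (V x) x) {B : Set X}
    {𝒢 : Set (Set X)} (hne : {x ∈ thetaCl B | (· ∩ B) '' V x = 𝒢}.Nonempty) :
    FinNonUrysohn {x ∈ thetaCl B | (· ∩ B) '' V x = 𝒢} := by
  refine ⟨hne, fun F hFA _ hFfin U hU => ?_⟩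
  obtain ⟨x₀, hx₀B, hx₀𝒢⟩ := hne
  have hshift : ∀ a ∈ F, ∃ W ∈ V x₀, W ∩ B ⊆ closure (U a) := by
    intro a ha
    obtain ⟨W, hWV, hWU⟩ := (hV a).2 (U a) (hU a ha).1 (hU a ha).2
    have hWB : W ∩ B ∈ (· ∩ B) '' V x₀ := by
      rw [hx₀𝒢, ← (hFA ha).2]
      exact mem_image_of_mem _ hWV
    obtain ⟨W', hW'V, hW'W⟩ := hWB
    refine ⟨W', hW'V, ?_⟩
    rw [show W' ∩ B = W ∩ B from hW'W]
    exact inter_subset_left.trans hWU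
  choose! W hWV hWU using hshift
  obtain ⟨y, hyW, hyB⟩ := inter_nonempty_of_mem_thetaCl_s13 hx₀B
    (isClosed_biInter fun a ha => ((hV x₀).1 _ (hWV a ha)).1)
    ((Filter.biInter_mem hFfin).2 fun a ha => ((hV x₀).1 _ (hWV a ha)).2)
  exact ⟨y, mem_iInter₂.2 fun a ha => hWU a ha ⟨mem_iInter₂.1 hyW a ha, hyB⟩⟩

lemma mk_thetaCl_le_s13 {κ : Cardinal.{u}} (hU : UrysohnNumber X < ℵ₀) (hκ : ℵ₀ ≤ κ)
    (hV : ∀ x, IsClosedNhdsCofinal (V x) x) (hVκ : ∀ x, #(V x) ≤ κ) {B : Set X}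
    (hB : #B ≤ κ) : #(thetaCl B) ≤ 2 ^ κ := by
  have h2κ : ℵ₀ ≤ 2 ^ κ := hκ.trans (cantor κ).le
  let trace : thetaCl B → {𝒢 : Set (Set X) // 𝒢 ⊆ 𝒫 B ∧ #𝒢 ≤ κ} := fun x =>
    ⟨(· ∩ B) '' V x, image_subset_iff.2 fun _ _ => inter_subset_right,
      mk_image_le.trans (hVκ x)⟩
  have hfiber : ∀ 𝒢, #(trace ⁻¹' {𝒢}) ≤ ℵ₀ := by
    intro 𝒢
    have hsub : Subtype.val '' (trace ⁻¹' {𝒢}) ⊆ {x ∈ thetaCl B | (· ∩ B) '' V x = 𝒢.1} := by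
      rintro _ ⟨x, hx, rfl⟩
      exact ⟨x.2, congrArg Subtype.val hx⟩
    refine (mk_image_eq Subtype.val_injective).ge.trans ((mk_le_mk_of_subset hsub).trans ?_)
    rcases eq_empty_or_nonempty {x ∈ thetaCl B | (· ∩ B) '' V x = 𝒢.1} with hS | hS
    · simp [hS]
    · exact ((finNonUrysohn_of_trace_eq hV hS).mk_lt_urysohnNumber hU).le.trans hU.le
  have htraces : #{𝒢 : Set (Set X) // 𝒢 ⊆ 𝒫 B ∧ #𝒢 ≤ κ} ≤ 2 ^ κ := by
    refine (mk_bounded_subset_le _ κ).trans ?_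
    calc max #(𝒫 B) ℵ₀ ^ κ ≤ (2 ^ κ) ^ κ :=
          power_le_power_right (max_le (mk_powerset B ▸ power_le_power_left two_ne_zero hB) h2κ)
      _ = 2 ^ κ := by rw [← power_mul, mul_eq_self hκ]
  calc #(thetaCl B) ≤ #{𝒢 : Set (Set X) // 𝒢 ⊆ 𝒫 B ∧ #𝒢 ≤ κ} * ℵ₀ :=
        mk_le_mk_mul_of_mk_preimage_le trace hfiber
    _ ≤ 2 ^ κ * 2 ^ κ := mul_le_mul' htraces h2κ
    _ = 2 ^ κ := mul_eq_self h2κ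

end ThetaClosureCardinality

section CardinalInvariants

variable [TopologicalSpace X]

def AlmostLindelofBound (X : Type u) [TopologicalSpace X] (τ : Cardinal.{u}) : Prop :=
  ∀ 𝒰 : Set (Set X), (∀ U ∈ 𝒰, IsOpen U) → ⋃₀ 𝒰 = Set.univ →
    ∃ 𝒱 ⊆ 𝒰, #𝒱 ≤ τ ∧ (⋃ V ∈ 𝒱, closure V) = Set.univ

lemma AlmostLindelofBound.mono {τ τ' : Cardinal.{u}} (h : AlmostLindelofBound X τ)
    (hτ : τ ≤ τ') : AlmostLindelofBound X τ' := fun 𝒰 hU hcov =>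
  let ⟨𝒱, h𝒱𝒰, h𝒱τ, h𝒱⟩ := h 𝒰 hU hcov
  ⟨𝒱, h𝒱𝒰, h𝒱τ.trans hτ, h𝒱⟩

lemma AlmostLindelofBound.exists_iUnion_closure_eq_univ {τ : Cardinal.{u}}
    (h : AlmostLindelofBound X τ) {ι : Type u} {U : ι → Set X} (hU : ∀ i, IsOpen (U i))
    (hcov : ⋃ i, U i = Set.univ) : ∃ S : Set ι, #S ≤ τ ∧ ⋃ i ∈ S, closure (U i) = Set.univ := by
  obtain ⟨𝒱, h𝒱U, h𝒱τ, h𝒱⟩ := h (range U) (forall_mem_range.2 hU) (sUnion_range U ▸ hcov)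
  choose i hi using fun V : 𝒱 => h𝒱U V.2
  refine ⟨range i, mk_range_le.trans h𝒱τ, eq_univ_of_univ_subset fun x hx => ?_⟩
  obtain ⟨V, hV𝒱, hxV⟩ := mem_iUnion₂.1 (h𝒱 ▸ hx)
  exact mem_biUnion (mem_range_self ⟨V, hV𝒱⟩) (hi ⟨V, hV𝒱⟩ ▸ hxV)

lemma aLdeg_spec : ℵ₀ ≤ aLdeg X ∧ AlmostLindelofBound X (aLdeg X) := by
  refine csInf_mem (s := {τ | ℵ₀ ≤ τ ∧ AlmostLindelofBound X τ})
    ⟨max ℵ₀ #(Set X), le_max_left _ _, fun 𝒰 _ hcov => ⟨𝒰, subset_rfl,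
    (mk_set_le _).trans (le_max_right _ _), eq_univ_of_univ_subset ?_⟩⟩
  rw [← hcov]
  exact sUnion_subset fun U hU => subset_closure.trans (subset_biUnion_of_mem hU)

lemma kappaInv_spec :
    ℵ₀ ≤ kappaInv X ∧ ∀ x : X, ∃ V : Set (Set X), #V ≤ kappaInv X ∧ IsClosedNhdsCofinal V x :=
  csInf_mem (s := {κ | ℵ₀ ≤ κ ∧ ∀ x : X, ∃ V : Set (Set X), #V ≤ κ ∧ IsClosedNhdsCofinal V x})
    ⟨max ℵ₀ #(Set X), le_max_left _ _, fun x =>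
    ⟨{W | IsClosed W ∧ W ∈ 𝓝 x}, (mk_set_le _).trans (le_max_right _ _), fun _ hW => hW,
      fun U hU hxU => ⟨closure U, ⟨isClosed_closure,
        Filter.mem_of_superset (hU.mem_nhds hxU) subset_closure⟩, subset_rfl⟩⟩⟩

end CardinalInvariants

section CardinalityBound

variable [TopologicalSpace X] {κ : Cardinal.{u}} {V : X → Set (Set X)}

lemma exists_closed_under_thetaCl_and_cover_witnesses [Nonempty X]
    (hU : UrysohnNumber X < ℵ₀) (hκ : ℵ₀ ≤ κ) (hV : ∀ x, IsClosedNhdsCofinal (V x) x)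
    (hVκ : ∀ x, #(V x) ≤ κ) :
    ∃ H : Set X, #H ≤ 2 ^ κ ∧ thetaCl H ⊆ H ∧
      ∀ B ⊆ H, #B ≤ κ → ∀ 𝒲 ⊆ ⋃ x ∈ B, V x, H ⊆ ⋃₀ 𝒲 → ⋃₀ 𝒲 = Set.univ := by
  have hwit : ∀ 𝒲 : Set (Set X), ∃ z, z ∈ ⋃₀ 𝒲 → ⋃₀ 𝒲 = Set.univ := fun 𝒲 => by
    by_contra! h
    exact (h (Classical.arbitrary X)).2 (eq_univ_of_forall fun z => (h z).1)
  choose w hw using hwit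
  have hF : ∀ B : Set X, #B ≤ κ → #↥(thetaCl B ∪ w '' 𝒫 (⋃ x ∈ B, V x)) ≤ 2 ^ κ := by
    intro B hB
    have hT : #(⋃ x ∈ B, V x) ≤ κ :=
      calc #(⋃ x ∈ B, V x) ≤ #B * ⨆ x : B, #(V x) := mk_biUnion_le V B
        _ ≤ κ * κ := mul_le_mul' hB (ciSup_le' fun x => hVκ x)
        _ = κ := mul_eq_self hκ
    calc #↥(thetaCl B ∪ w '' 𝒫 (⋃ x ∈ B, V x))
        ≤ #(thetaCl B) + #↥(w '' 𝒫 (⋃ x ∈ B, V x)) := mk_union_le _ _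
      _ ≤ 2 ^ κ + 2 ^ κ := add_le_add (mk_thetaCl_le_s13 hU hκ hV hVκ hB)
          (mk_image_le.trans ((mk_powerset _).trans_le (power_le_power_left two_ne_zero hT)))
      _ = 2 ^ κ := add_eq_self (hκ.trans (cantor κ).le)
  obtain ⟨H, hHκ, hH⟩ := exists_mk_le_closed_under_small_subsets hκ (cantor κ)
    (by rw [← power_mul, mul_eq_self hκ]) _ hF
  refine ⟨H, hHκ, fun x hx => ?_, fun B hBH hBκ 𝒲 h𝒲 hH𝒲 =>
    hw 𝒲 (hH𝒲 (hH B hBH hBκ (Or.inr ⟨𝒲, h𝒲, rfl⟩)))⟩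
  obtain ⟨B, hBH, hBV, hxB⟩ := (hV x).exists_subset_mem_thetaCl hx
  exact hH B hBH (hBV.trans (hVκ x)) (Or.inl hxB)

lemma exists_small_cover_notMem_of_thetaCl_subset (haL : AlmostLindelofBound X κ)
    (hV : ∀ x, IsClosedNhdsCofinal (V x) x) {H : Set X} (hθ : thetaCl H ⊆ H) {q : X}
    (hq : q ∉ H) : ∃ B ⊆ H, #B ≤ κ ∧ ∃ 𝒲 ⊆ ⋃ x ∈ B, V x, H ⊆ ⋃₀ 𝒲 ∧ q ∉ ⋃₀ 𝒲 := by
  classical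
  have hinside : ∀ x ∈ H, ∃ W ∈ V x, q ∉ W := by
    intro x hx
    obtain ⟨U, hU, hxU, hqU⟩ :=
      exists_isOpen_notMem_closure_of_notMem_thetaCl hx fun h => hq (hθ h)
    obtain ⟨W, hWV, hWU⟩ := (hV x).2 U hU hxU
    exact ⟨W, hWV, fun hqW => hqU (hWU hqW)⟩
  have houtside : ∀ y ∉ H, ∃ G, IsOpen G ∧ y ∈ G ∧ closure G ∩ H = ∅ :=
    fun y hy => notMem_thetaCl_iff.1 fun h => hy (hθ h)
  choose! W hWV hqW using hinside
  choose! G hGo hyG hGH using houtside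
  let U : X → Set X := H.piecewise (fun x => interior (W x)) G
  have hU_mem : ∀ z ∈ H, U z = interior (W z) := fun z hz => piecewise_eq_of_mem _ _ _ hz
  have hU_notMem : ∀ z ∉ H, U z = G z := fun z hz => piecewise_eq_of_notMem _ _ _ hz
  have hUo : ∀ z, IsOpen (U z) := fun z => by
    by_cases hz : z ∈ H
    · exact hU_mem z hz ▸ isOpen_interior
    · exact hU_notMem z hz ▸ hGo z hz
  have hUcov : ⋃ z, U z = Set.univ := eq_univ_of_forall fun z => mem_iUnion.2 ⟨z, by
    by_cases hz : z ∈ H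
    · exact hU_mem z hz ▸ mem_interior_iff_mem_nhds.2 ((hV z).1 _ (hWV z hz)).2
    · exact hU_notMem z hz ▸ hyG z hz⟩
  obtain ⟨S, hSκ, hS⟩ := haL.exists_iUnion_closure_eq_univ hUo hUcov
  have hcover : H ⊆ ⋃₀ (W '' (S ∩ H)) := by
    intro x hx
    obtain ⟨z, hzS, hxz⟩ := mem_iUnion₂.1 (hS ▸ mem_univ x)
    by_cases hz : z ∈ H
    · rw [hU_mem z hz] at hxz
      exact ⟨W z, mem_image_of_mem W ⟨hzS, hz⟩,
        ((hV z).1 _ (hWV z hz)).1.closure_subset_iff.2 interior_subset hxz⟩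
    · rw [hU_notMem z hz] at hxz
      exact (eq_empty_iff_forall_notMem.1 (hGH z hz) x ⟨hxz, hx⟩).elim
  refine ⟨S ∩ H, inter_subset_right, (mk_le_mk_of_subset inter_subset_left).trans hSκ,
    W '' (S ∩ H), image_subset_iff.2 fun z hz => mem_biUnion hz (hWV z hz.2), hcover, ?_⟩
  rintro ⟨_, ⟨z, hz, rfl⟩, hqz⟩
  exact hqW z hz.2 hqz

lemma eq_univ_of_closed_under_thetaCl_and_cover_witnesses (haL : AlmostLindelofBound X κ)
    (hV : ∀ x, IsClosedNhdsCofinal (V x) x) {H : Set X} (hθ : thetaCl H ⊆ H)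
    (hwit : ∀ B ⊆ H, #B ≤ κ → ∀ 𝒲 ⊆ ⋃ x ∈ B, V x, H ⊆ ⋃₀ 𝒲 → ⋃₀ 𝒲 = Set.univ) :
    H = Set.univ := by
  refine eq_univ_of_forall fun q => by_contra fun hq => ?_
  obtain ⟨B, hBH, hBκ, 𝒲, h𝒲, hH𝒲, hq𝒲⟩ :=
    exists_small_cover_notMem_of_thetaCl_subset haL hV hθ hq
  exact hq𝒲 (hwit B hBH hBκ 𝒲 h𝒲 hH𝒲 ▸ mem_univ q)

theorem mk_le_two_power_of_urysohnNumber_lt_aleph0 (hU : UrysohnNumber X < ℵ₀)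
    (hκ : ℵ₀ ≤ κ) (hV : ∀ x, IsClosedNhdsCofinal (V x) x) (hVκ : ∀ x, #(V x) ≤ κ)
    (haL : AlmostLindelofBound X κ) : #X ≤ 2 ^ κ := by
  rcases isEmpty_or_nonempty X with hX | hX
  · simp
  obtain ⟨H, hHκ, hθ, hwit⟩ := exists_closed_under_thetaCl_and_cover_witnesses hU hκ hV hVκ
  rw [← mk_univ, ← eq_univ_of_closed_under_thetaCl_and_cover_witnesses haL hV hθ hwit]
  exact hHκ

end CardinalityBound

theorem statement13 (X : Type u) [TopologicalSpace X]
    (h : UrysohnNumber X < ℵ₀) : #X ≤ 2 ^ (kappaInv X * aLdeg X) := by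
  obtain ⟨hkω, hkV⟩ := kappaInv_spec (X := X)
  obtain ⟨haω, haL⟩ := aLdeg_spec (X := X)
  choose V hVκ hV using hkV
  have hk : kappaInv X ≤ kappaInv X * aLdeg X := le_mul_right (aleph0_pos.trans_le haω).ne'
  have ha : aLdeg X ≤ kappaInv X * aLdeg X := le_mul_left (aleph0_pos.trans_le hkω).ne'
  exact mk_le_two_power_of_urysohnNumber_lt_aleph0 h (hkω.trans hk) hV
    (fun x => (hVκ x).trans hk) (haL.mono ha)
end

section
/- Let X be a topological space and n an integer with 1 < n < ω. If U(X) = n, then there exists a set A ⊆ X with |A| = n − 1 such that A equals the intersection over all choices C = {closure(U_a) : a ∈ A, U_a an open neighborhood of a} of cl_θ(⋂C), and for every set B ⊆ X with |B| ≥ n the corresponding intersection over all choices for B is empty. -/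
open Set Topology Cardinal

universe u

variable {X : Type u}

lemma thetaCl_empty [TopologicalSpace X] : thetaCl (∅ : Set X) = ∅ := by
  ext x
  simp only [thetaCl, Set.mem_setOf_eq, Set.mem_empty_iff_false, iff_false]
  intro hx
  obtain ⟨z, _, hz⟩ := hx Set.univ isOpen_univ (Set.mem_univ x)
  exact hz

theorem statement14 [TopologicalSpace X] (n : ℕ) (hn : 1 < n)
    (h : UrysohnNumber X = n) :
    ∃ A : Set X, #↥A = (n - 1 : ℕ) ∧ A = capSet A ∧
      ∀ B : Set X, (n : Cardinal) ≤ #↥B → capSet B = ∅ := by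
  classical
  set S : Set Cardinal.{u} := {κ : Cardinal.{u} | ∀ A : Set X, κ ≤ #↥A → ∃ U : X → Set X,
    (∀ a ∈ A, IsOpen (U a) ∧ a ∈ U a) ∧ (⋂ a ∈ A, closure (U a)) = ∅} with hSdef
  have hSne : S.Nonempty := by
    by_contra hne
    rw [Set.not_nonempty_iff_eq_empty] at hne
    rw [UrysohnNumber, ← hSdef, hne, sInf_empty] at h
    have h0 : (0 : Cardinal) = (n : Cardinal) := h
    have : n = 0 := by exact_mod_cast h0.symm
    omega
  have hmem : (n : Cardinal) ∈ S := h ▸ csInf_mem hSne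
  have hnotmem : ((n - 1 : ℕ) : Cardinal) ∉ S := by
    intro hm
    have h1 : UrysohnNumber X ≤ ((n - 1 : ℕ) : Cardinal) := csInf_le' hm
    rw [h] at h1
    have : n ≤ n - 1 := by exact_mod_cast h1
    omega
  simp only [hSdef, Set.mem_setOf_eq] at hnotmem
  push_neg at hnotmem
  obtain ⟨A₀, hA₀card, hA₀⟩ := hnotmem
  obtain ⟨A, hAsub, hAcard⟩ := Cardinal.le_mk_iff_exists_subset.mp hA₀card
  have hAfin : A.Finite := by
    rw [← Cardinal.lt_aleph0_iff_set_finite, hAcard]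
    exact Cardinal.nat_lt_aleph0 _
  -- The third conclusion: every B with #B ≥ n has capSet B = ∅
  have hB : ∀ B : Set X, (n : Cardinal) ≤ #↥B → capSet B = ∅ := by
    intro B hBcard
    obtain ⟨U, hU, hUe⟩ := hmem B hBcard
    rw [Set.eq_empty_iff_forall_notMem]
    intro y hy
    have := hy U hU
    rw [hUe, thetaCl_empty] at this
    exact this
  refine ⟨A, hAcard, ?_, hB⟩
  apply Set.Subset.antisymm
  · -- A ⊆ capSet A
    intro a ha U hU V hV haV
    set W : X → Set X := fun x => if x = a then V ∩ U a else if x ∈ A then U x else Set.univ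
      with hWdef
    have hWcond : ∀ x ∈ A₀, IsOpen (W x) ∧ x ∈ W x := by
      intro x hx
      by_cases hxa : x = a
      · subst hxa
        simp only [hWdef, if_pos rfl]
        exact ⟨hV.inter (hU x ha).1, haV, (hU x ha).2⟩
      · by_cases hxA : x ∈ A
        · simp only [hWdef, if_neg hxa, if_pos hxA]
          exact hU x hxA
        · simp only [hWdef, if_neg hxa, if_neg hxA]
          exact ⟨isOpen_univ, Set.mem_univ x⟩
    obtain ⟨z, hz⟩ := hA₀ W hWcond
    simp only [Set.mem_iInter] at hz
    refine ⟨z, ?_, ?_⟩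
    · have hza := hz a (hAsub ha)
      have : W a = V ∩ U a := by simp [hWdef]
      rw [this] at hza
      exact closure_mono Set.inter_subset_left hza
    · simp only [Set.mem_iInter]
      intro x hx
      have hzx := hz x (hAsub hx)
      by_cases hxa : x = a
      · subst hxa
        have : W x = V ∩ U x := by simp [hWdef]
        rw [this] at hzx
        exact closure_mono Set.inter_subset_right hzx
      · have : W x = U x := by simp [hWdef, hxa, hx]
        rwa [this] at hzx
  · -- capSet A ⊆ A
    intro y hy
    by_contra hyA
    have hins : (n : Cardinal) ≤ #↥(insert y A) := by
      rw [Cardinal.mk_insert hyA, hAcard]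
      have : ((n - 1 : ℕ) : Cardinal) + 1 = ((n - 1 + 1 : ℕ) : Cardinal) := by
        push_cast; ring
      rw [this]
      have : n - 1 + 1 = n := by omega
      rw [this]
    obtain ⟨U, hU, hUe⟩ := hmem (insert y A) hins
    have hUA : ∀ a ∈ A, IsOpen (U a) ∧ a ∈ U a := fun a ha =>
      hU a (Set.mem_insert_of_mem y ha)
    have hyU := hU y (Set.mem_insert y A)
    obtain ⟨z, hz1, hz2⟩ := hy U hUA (U y) hyU.1 hyU.2
    have : z ∈ ⋂ a ∈ insert y A, closure (U a) := by
      simp only [Set.mem_iInter, Set.mem_insert_iff]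
      rintro x (rfl | hx)
      · exact hz1
      · exact Set.mem_iInter.mp (Set.mem_iInter.mp hz2 x) hx
    rw [hUe] at this
    exact this
end
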